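/- arXiv:q-alg/9612023 — 4 statements merged into one kernel-verified Lean document; each statement's English description precedes it below -/
import Mathlib

section
/- Let A be a k-algebra, C a k-coalgebra, and M a left A-module and right C-comodule satisfying δ(am) = (a ⊗ 1)δ(m) (an A-C-dimodule). If P is a finitely generated left A-module, then Hom_A(P, M) carries a right C-comodule structure δ such that the composition of δ with the canonical map Hom_A(P,M) ⊗ C → Hom_A(P, M ⊗ C) equals Hom_A(P, δ_M). -/
/-!
Let `Φ_V : Hom_A(P, M) ⊗ V → Map(P, M ⊗ V)` send `x` to `p ↦ (ev_p ⊗ 1) x`. Over a field `Φ_V`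
is injective: expanding `x` along a basis of `V`, every coefficient is killed by every `ev_p`.
When `P` is finitely generated, `Hom_A(P, δ_M)` lands in the image of `Φ_C`: the values of
`δ_M ∘ f` on finitely many generators lie in `M ⊗ U` for a finite-dimensional `U ≤ C`, hence so
does the `A`-submodule they generate, and `Φ_U` is onto `Hom_A(P, M ⊗ U)` because coordinates
along a basis of `U` are `A`-linear. So `δ := Φ_C⁻¹ ∘ Hom_A(P, δ_M)` is defined, and its comodule
axioms follow from those of `δ_M` after applying the injective maps `Φ_{C ⊗ C}` and `ev_p`.
-/

open TensorProduct

theorem LinearMap.exists_comp_eq_of_range_le {R M N Q : Type*} [Semiring R] [AddCommMonoid M]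
    [AddCommMonoid N] [AddCommMonoid Q] [Module R M] [Module R N] [Module R Q]
    {f : N →ₗ[R] Q} (hf : Function.Injective f) {g : M →ₗ[R] Q}
    (h : LinearMap.range g ≤ LinearMap.range f) : ∃ g' : M →ₗ[R] N, f ∘ₗ g' = g :=
  ⟨(LinearEquiv.ofInjective f hf).symm.toLinearMap ∘ₗ g.codRestrict _ fun m => h ⟨m, rfl⟩,
    by ext; simp⟩

theorem LinearMap.injective_pi_applyₗ' {k A P M : Type*} [Semiring k] [Semiring A]
    [AddCommMonoid P] [AddCommMonoid M] [Module A P] [Module A M] [Module k M]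
    [SMulCommClass A k M] :
    Function.Injective (LinearMap.pi fun p : P => LinearMap.applyₗ' (R := A) (M₂ := M) k p) :=
  fun _ _ h => LinearMap.ext (congrFun h)

theorem LinearMap.rTensor_distribSMul_toLinearMap {k A M N : Type*} [CommSemiring k]
    [Semiring A] [Algebra k A] [AddCommMonoid M] [AddCommMonoid N] [Module k M] [Module k N]
    [Module A M] [IsScalarTower k A M] (a : A) :
    (DistribSMul.toLinearMap k M a).rTensor N = DistribSMul.toLinearMap k (M ⊗[k] N) a :=
  TensorProduct.ext' fun _ _ => rfl

namespace TensorProduct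

section Free

variable {R W M V ι κ : Type*} [CommSemiring R] [AddCommMonoid W] [Module R W] [AddCommMonoid M]
  [Module R M] [AddCommMonoid V] [Module R V]

theorem equivFinsuppOfBasisRight_rTensor [DecidableEq κ] (𝒞 : Module.Basis κ R V)
    (f : W →ₗ[R] M) (x : W ⊗[R] V) :
    equivFinsuppOfBasisRight 𝒞 (f.rTensor V x) =
      (equivFinsuppOfBasisRight 𝒞 x).mapRange f f.map_zero := by
  induction x <;> ext <;> simp_all

theorem injective_pi_rTensor [Module.Free R V] {e : ι → W →ₗ[R] M}
    (he : Function.Injective (LinearMap.pi e)) :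
    Function.Injective (LinearMap.pi fun i => (e i).rTensor V) := by
  classical
  intro x y h
  refine (equivFinsuppOfBasisRight (Module.Free.chooseBasis R V)).injective
    (Finsupp.ext fun j => he (funext fun i => ?_))
  simpa [equivFinsuppOfBasisRight_rTensor] using
    congr(equivFinsuppOfBasisRight _ ($(h) i) j)

end Free

section Coalgebra

variable {R W M C ι : Type*} [CommSemiring R] [AddCommMonoid W] [Module R W] [AddCommMonoid M]
  [Module R M] [AddCommMonoid C] [Module R C] [Coalgebra R C]
  {e : ι → W →ₗ[R] M} {δ : W →ₗ[R] W ⊗[R] C} {δM : M →ₗ[R] M ⊗[R] C}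

theorem coassoc_of_injective_pi [Module.Free R C] (he : Function.Injective (LinearMap.pi e))
    (hδ : ∀ i, (e i).rTensor C ∘ₗ δ = δM ∘ₗ e i)
    (hcoassoc : (TensorProduct.assoc R M C C).toLinearMap ∘ₗ δM.rTensor C ∘ₗ δM =
      Coalgebra.comul.lTensor M ∘ₗ δM) :
    (TensorProduct.assoc R W C C).toLinearMap ∘ₗ δ.rTensor C ∘ₗ δ =
      Coalgebra.comul.lTensor W ∘ₗ δ := by
  ext w
  refine injective_pi_rTensor he (funext fun i => ?_)
  have hδw (x : W) : (e i).rTensor C (δ x) = δM (e i x) := congr($(hδ i) x)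
  calc (e i).rTensor (C ⊗[R] C) (TensorProduct.assoc R W C C (δ.rTensor C (δ w)))
      = TensorProduct.assoc R M C C (((e i).rTensor C ∘ₗ δ).rTensor C (δ w)) := by
        simp [LinearMap.rTensor_tensor, LinearMap.rTensor_comp]
    _ = TensorProduct.assoc R M C C (δM.rTensor C (δM (e i w))) := by
        simp [hδ i, LinearMap.rTensor_comp, hδw]
    _ = Coalgebra.comul.lTensor M (δM (e i w)) := congr($hcoassoc (e i w))
    _ = (e i).rTensor (C ⊗[R] C) (Coalgebra.comul.lTensor W (δ w)) := by
        rw [← hδw]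
        exact congr($((LinearMap.lTensor_comp_rTensor (f := e i) (g := Coalgebra.comul)).trans
          (LinearMap.rTensor_comp_lTensor ..).symm) (δ w))

theorem counit_of_injective_pi (he : Function.Injective (LinearMap.pi e))
    (hδ : ∀ i, (e i).rTensor C ∘ₗ δ = δM ∘ₗ e i)
    (hcounit : (TensorProduct.rid R M).toLinearMap ∘ₗ Coalgebra.counit.lTensor M ∘ₗ δM =
      LinearMap.id) :
    (TensorProduct.rid R W).toLinearMap ∘ₗ Coalgebra.counit.lTensor W ∘ₗ δ = LinearMap.id := by
  ext w
  refine he (funext fun i => ?_)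
  have hδw : (e i).rTensor C (δ w) = δM (e i w) := congr($(hδ i) w)
  calc e i (TensorProduct.rid R W (Coalgebra.counit.lTensor W (δ w)))
      = TensorProduct.rid R M (Coalgebra.counit.lTensor M ((e i).rTensor C (δ w))) := by
        induction δ w <;> simp_all
    _ = e i w := by rw [hδw]; exact congr($hcounit (e i w))

end Coalgebra

section Hom

variable {k A M P V : Type*} [Semiring A] [AddCommMonoid P] [Module A P]

theorem exists_forall_rTensor_applyₗ'_eq_of_free [CommSemiring k] [Algebra k A] [AddCommMonoid M]
    [Module k M] [Module A M] [IsScalarTower k A M] [AddCommMonoid V] [Module k V]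
    [Module.Free k V] [Module.Finite k V] (G : P →ₗ[A] M ⊗[k] V) :
    ∃ y : (P →ₗ[A] M) ⊗[k] V, ∀ p, (LinearMap.applyₗ' k p).rTensor V y = G p := by
  classical
  let b := Module.Free.chooseBasis k V
  let coord (i : Module.Free.ChooseBasisIndex k V) : M ⊗[k] V →ₗ[A] M :=
    (AlgebraTensorModule.rid k A M).toLinearMap ∘ₗ AlgebraTensorModule.lTensor A M (b.coord i)
  have hexpand (z : M ⊗[k] V) : ∑ i, coord i z ⊗ₜ b i = z := by
    conv_rhs => rw [← (equivFinsuppOfBasisRight b).symm_apply_apply z]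
    rw [equivFinsuppOfBasisRight_symm_apply, Finsupp.sum_fintype _ _ (by simp)]
    simp only [equivFinsuppOfBasisRight_apply]
    rfl
  refine ⟨∑ i, (coord i ∘ₗ G) ⊗ₜ b i, fun p => ?_⟩
  simpa using hexpand (G p)

theorem exists_forall_rTensor_applyₗ'_eq_of_fg [Field k] [Algebra k A] [AddCommGroup M]
    [Module k M] [Module A M] [IsScalarTower k A M] [AddCommGroup V] [Module k V]
    [Module.Finite A P] (G : P →ₗ[A] M ⊗[k] V) :
    ∃ y : (P →ₗ[A] M) ⊗[k] V, ∀ p, (LinearMap.applyₗ' k p).rTensor V y = G p := by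
  obtain ⟨s, hs⟩ := Module.Finite.fg_top (R := A) (M := P)
  obtain ⟨U, _, hU⟩ :=
    exists_finite_submodule_right_of_setFinite (G '' s) (s.finite_toSet.image G)
  let incl : M ⊗[k] U →ₗ[A] M ⊗[k] V := AlgebraTensorModule.lTensor A M U.subtype
  have hincl : Function.Injective incl :=
    Module.Flat.lTensor_preserves_injective_linearMap _ U.injective_subtype
  have hrange : LinearMap.range G ≤ LinearMap.range incl := by
    rw [LinearMap.range_eq_map, ← hs, Submodule.map_span_le]
    exact fun p hp => hU ⟨p, hp, rfl⟩
  obtain ⟨G', hG'⟩ := LinearMap.exists_comp_eq_of_range_le hincl hrange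
  obtain ⟨y, hy⟩ := exists_forall_rTensor_applyₗ'_eq_of_free G'
  refine ⟨U.subtype.lTensor _ y, fun p => ?_⟩
  rw [← hG', LinearMap.comp_apply, ← hy]
  exact congr($((LinearMap.rTensor_comp_lTensor ..).trans
    (LinearMap.lTensor_comp_rTensor ..).symm) y)

end Hom

end TensorProduct

theorem stmt3_general (k A C M P : Type*) [Field k] [Ring A] [Algebra k A]
    [AddCommGroup C] [Module k C] [Coalgebra k C]
    [AddCommGroup M] [Module k M] [Module A M] [IsScalarTower k A M] [SMulCommClass A k M]
    [AddCommGroup P] [Module A P] [Module.Finite A P]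
    (δM : M →ₗ[k] M ⊗[k] C)
    (hcoassoc : (TensorProduct.assoc k M C C).toLinearMap ∘ₗ (LinearMap.rTensor C δM) ∘ₗ δM =
      (LinearMap.lTensor M Coalgebra.comul) ∘ₗ δM)
    (hcounit : (TensorProduct.rid k M).toLinearMap ∘ₗ (LinearMap.lTensor M Coalgebra.counit) ∘ₗ δM =
      LinearMap.id)
    (hdimod : ∀ (a : A) (m : M),
      δM (a • m) = LinearMap.rTensor C (DistribMulAction.toLinearMap k M a) (δM m)) :
    ∃ δ : (P →ₗ[A] M) →ₗ[k] (P →ₗ[A] M) ⊗[k] C,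
      ((TensorProduct.assoc k (P →ₗ[A] M) C C).toLinearMap ∘ₗ (LinearMap.rTensor C δ) ∘ₗ δ =
        (LinearMap.lTensor (P →ₗ[A] M) Coalgebra.comul) ∘ₗ δ) ∧
      ((TensorProduct.rid k (P →ₗ[A] M)).toLinearMap ∘ₗ
          (LinearMap.lTensor (P →ₗ[A] M) Coalgebra.counit) ∘ₗ δ = LinearMap.id) ∧
      ∀ (f : P →ₗ[A] M) (p : P),
        LinearMap.rTensor C
          ({ toFun := fun g : P →ₗ[A] M => g p,
             map_add' := fun _ _ => rfl,
             map_smul' := fun _ _ => rfl } : (P →ₗ[A] M) →ₗ[k] M) (δ f) = δM (f p) := by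
  let ev (p : P) : (P →ₗ[A] M) →ₗ[k] M := LinearMap.applyₗ' k p
  let δA : M →ₗ[A] M ⊗[k] C :=
    { δM.toAddHom with
      map_smul' a m := (hdimod a m).trans
        congr($(LinearMap.rTensor_distribSMul_toLinearMap (N := C) a) (δM m)) }
  have hrange : LinearMap.range (LinearMap.pi fun p => δM ∘ₗ ev p) ≤
      LinearMap.range (LinearMap.pi fun p => (ev p).rTensor C) := by
    rintro _ ⟨f, rfl⟩
    obtain ⟨y, hy⟩ := exists_forall_rTensor_applyₗ'_eq_of_fg (δA ∘ₗ f)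
    exact ⟨y, funext hy⟩
  obtain ⟨δ, hδ⟩ := LinearMap.exists_comp_eq_of_range_le
    (injective_pi_rTensor LinearMap.injective_pi_applyₗ') hrange
  have hδp (p : P) : (ev p).rTensor C ∘ₗ δ = δM ∘ₗ ev p :=
    LinearMap.ext fun f => congrFun congr($hδ f) p
  exact ⟨δ, coassoc_of_injective_pi LinearMap.injective_pi_applyₗ' hδp hcoassoc,
    counit_of_injective_pi LinearMap.injective_pi_applyₗ' hδp hcounit,
    fun f p => congr($(hδp p) f)⟩

/-- Let `A` be a `k`-algebra, `C` a `k`-coalgebra, and `M` a left `A`-module and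
right `C`-comodule satisfying `δ(am) = (a ⊗ 1) δ(m)` (an `A`-`C`-dimodule).  If `P` is a
finitely generated left `A`-module, then `Hom_A(P, M)` carries a right `C`-comodule structure
`δ` such that composing `δ` with the canonical map
`Hom_A(P,M) ⊗ C → Hom_A(P, M ⊗ C)` equals `Hom_A(P, δ_M)`; equivalently, for every
`f : Hom_A(P,M)` and `p : P` one has `(ev_p ⊗ 1)(δ f) = δ_M (f p)`. -/
theorem stmt3 (k A C M P : Type*) [Field k] [Ring A] [Algebra k A]
    [AddCommGroup C] [Module k C] [Coalgebra k C]
    [AddCommGroup M] [Module k M] [Module A M] [IsScalarTower k A M] [SMulCommClass A k M]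
    [AddCommGroup P] [Module k P] [Module A P] [IsScalarTower k A P] [SMulCommClass A k P]
    [Module.Finite A P]
    (δM : M →ₗ[k] M ⊗[k] C)
    (hcoassoc : (TensorProduct.assoc k M C C).toLinearMap ∘ₗ (LinearMap.rTensor C δM) ∘ₗ δM =
      (LinearMap.lTensor M Coalgebra.comul) ∘ₗ δM)
    (hcounit : (TensorProduct.rid k M).toLinearMap ∘ₗ (LinearMap.lTensor M Coalgebra.counit) ∘ₗ δM =
      LinearMap.id)
    (hdimod : ∀ (a : A) (m : M),
      δM (a • m) = LinearMap.rTensor C (DistribMulAction.toLinearMap k M a) (δM m)) :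
    ∃ δ : (P →ₗ[A] M) →ₗ[k] (P →ₗ[A] M) ⊗[k] C,
      ((TensorProduct.assoc k (P →ₗ[A] M) C C).toLinearMap ∘ₗ (LinearMap.rTensor C δ) ∘ₗ δ =
        (LinearMap.lTensor (P →ₗ[A] M) Coalgebra.comul) ∘ₗ δ) ∧
      ((TensorProduct.rid k (P →ₗ[A] M)).toLinearMap ∘ₗ
          (LinearMap.lTensor (P →ₗ[A] M) Coalgebra.counit) ∘ₗ δ = LinearMap.id) ∧
      ∀ (f : P →ₗ[A] M) (p : P),
        LinearMap.rTensor C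
          ({ toFun := fun g : P →ₗ[A] M => g p,
             map_add' := fun _ _ => rfl,
             map_smul' := fun _ _ => rfl } : (P →ₗ[A] M) →ₗ[k] M) (δ f) = δM (f p) :=
  stmt3_general k A C M P δM hcoassoc hcounit hdimod
end

section
/- For a k[B_n]-module M and unit ζ, the subspace M(ζ) := {m ∈ M | φ⁻¹τ_i²φ(m) = ζ²m for all φ ∈ B_n, i = 1,...,n−1} is a k[B_n]-submodule of M, and the formulas σ_i(m) := ζ⁻¹τ_i(m) define a k[S_n]-module structure on M(ζ). -/
/-- The defining relations of the Artin braid group with `m` generators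
`τ_0, …, τ_{m-1}` (so this presents the braid group `B_{m+1}`). -/
def braidRels (m : ℕ) : Set (FreeGroup (Fin m)) :=
  {r | (∃ i j : Fin m, (i : ℕ) + 2 ≤ (j : ℕ) ∧
        r = FreeGroup.of i * FreeGroup.of j * (FreeGroup.of i)⁻¹ * (FreeGroup.of j)⁻¹) ∨
      (∃ i j : Fin m, (i : ℕ) + 1 = (j : ℕ) ∧
        r = FreeGroup.of i * FreeGroup.of j * FreeGroup.of i *
            (FreeGroup.of j)⁻¹ * (FreeGroup.of i)⁻¹ * (FreeGroup.of j)⁻¹)}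

/-- The braid group on `m` generators (i.e. the Artin braid group `B_{m+1}`). -/
abbrev BraidGroup (m : ℕ) := PresentedGroup (braidRels m)

/-- The canonical generators `τ_i` of the braid group. -/
def braidGen {m : ℕ} (i : Fin m) : BraidGroup m := PresentedGroup.of i

/-- The `ζ`-symmetrization subspace
`M(ζ) = {m ∈ M | φ⁻¹ τ_i² φ (m) = ζ² m for all φ ∈ B, i}` of a `k[B]`-module `M`,
where `B` is the braid group on `m` generators. -/
def Mzeta (k : Type*) [Field k] (m : ℕ) (M : Type*) [AddCommGroup M] [Module k M]
    [DistribMulAction (BraidGroup m) M] [SMulCommClass (BraidGroup m) k M] (ζ : kˣ) :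
    Submodule k M where
  carrier := {x | ∀ (φ : BraidGroup m) (i : Fin m),
    (φ⁻¹ * braidGen i ^ 2 * φ) • x = ((ζ : k) ^ 2) • x}
  add_mem' := by
    intro a b ha hb φ i
    rw [smul_add, ha φ i, hb φ i, smul_add]
  zero_mem' := by
    intro φ i
    rw [smul_zero, smul_zero]
  smul_mem' := by
    intro c x hx φ i
    rw [smul_comm, hx φ i, smul_comm]

/-!
Conjugating the defining condition of `M(ζ)` at `φ g` by `g` gives the condition at `φ` for
`g • x`, so `M(ζ)` is stable. On `M(ζ)` the operators `σ_i = ζ⁻¹ τ_i` satisfy `σ_i² = 1` (the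
condition at `φ = 1`) and inherit the braid relations of the `τ_i`: these are the Coxeter relations
of `S_n`. They present `S_n`: given any family satisfying them, write each permutation in the
normal form `π = (s_a ⋯ s_{m-1}) π'`, with `π'` fixing `m` and `a = π m`, and evaluate the word.
This map sends `s_i π` to `σ_i ρ(π)` (by cases on `π m` against `i`, using the braid relation when
`s_i` slides through the cycle as `s_{i-1}`), hence is multiplicative since the `s_i` generate.
-/

open Equiv MulAction

section AscProd

variable {G : Type*} [Monoid G]

def ascProd (f : ℕ → G) : ℕ → ℕ → G
  | _, 0 => 1
  | a, k + 1 => f a * ascProd f (a + 1) k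

@[simp]
theorem ascProd_zero (f : ℕ → G) (a : ℕ) : ascProd f a 0 = 1 := rfl

theorem ascProd_succ (f : ℕ → G) (a k : ℕ) : ascProd f a (k + 1) = f a * ascProd f (a + 1) k :=
  rfl

theorem ascProd_mem {S : Submonoid G} {f : ℕ → G} :
    ∀ {a k : ℕ}, (∀ j, a ≤ j → j < a + k → f j ∈ S) → ascProd f a k ∈ S
  | _, 0, _ => S.one_mem
  | a, k + 1, h => S.mul_mem (h a le_rfl (by omega))
      (ascProd_mem fun j hj hjk => h j (by omega) (by omega))

theorem commute_ascProd {f : ℕ → G} (hcomm : ∀ i j, i + 2 ≤ j → Commute (f i) (f j)) {i : ℕ} :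
    ∀ {a k : ℕ}, i + 2 ≤ a → Commute (f i) (ascProd f a k)
  | _, 0, _ => Commute.one_right _
  | _, _ + 1, h => (hcomm _ _ h).mul_right (commute_ascProd hcomm (by omega))

theorem mul_ascProd_eq_ascProd_mul {f : ℕ → G} (hcomm : ∀ i j, i + 2 ≤ j → Commute (f i) (f j))
    {j : ℕ} (hbraid : f j * f (j + 1) * f j = f (j + 1) * f j * f (j + 1)) :
    ∀ {a k : ℕ}, a ≤ j → j + 1 < a + k → f (j + 1) * ascProd f a k = ascProd f a k * f j
  | _, 0, _, h => by omega
  | a, k + 1, ha, h => by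
    rcases ha.lt_or_eq with ha | rfl
    · rw [ascProd_succ, ← mul_assoc, ((hcomm a (j + 1) (by omega)).eq).symm, mul_assoc,
        mul_ascProd_eq_ascProd_mul hcomm hbraid (by omega) (by omega), mul_assoc]
    · obtain ⟨k, rfl⟩ : ∃ k', k = k' + 1 := ⟨k - 1, by omega⟩
      have hc := (commute_ascProd hcomm (i := a) (a := a + 1 + 1) (k := k) le_rfl).eq
      simp only [ascProd_succ, ← mul_assoc, ← hbraid]
      rw [mul_assoc _ (f a), hc]
      simp only [mul_assoc]

end AscProd

/-- The Coxeter relations of `S_N` for `f 0, …, f (N - 2)`, stated for a family extended by `1`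
beyond `N - 2`: that extension still satisfies the first two relations everywhere, but not the
braid relation at `N - 2`. -/
structure SymmetricRelations {G : Type*} [Monoid G] (f : ℕ → G) (N : ℕ) : Prop where
  mul_self : ∀ i, f i * f i = 1
  commute : ∀ i j, i + 2 ≤ j → Commute (f i) (f j)
  braid : ∀ i, i + 2 < N → f i * f (i + 1) * f i = f (i + 1) * f i * f (i + 1)

def adjSwap (i : ℕ) : Perm ℕ := swap i (i + 1)

namespace adjSwap

@[simp]
theorem inv (i : ℕ) : (adjSwap i)⁻¹ = adjSwap i := swap_inv _ _

theorem braid (i : ℕ) :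
    adjSwap i * adjSwap (i + 1) * adjSwap i = adjSwap (i + 1) * adjSwap i * adjSwap (i + 1) := by
  ext x
  simp only [adjSwap, Perm.mul_apply, swap_apply_def]
  split_ifs <;> omega

theorem symmetricRelations (N : ℕ) : SymmetricRelations adjSwap N where
  mul_self i := swap_mul_self _ _
  commute i j h := (Perm.disjoint_swap_swap (by simp; omega)).commute
  braid i _ := braid i

theorem ascProd_apply_add (a k : ℕ) : ascProd adjSwap a k (a + k) = a := by
  induction k generalizing a with
  | zero => rfl
  | succ k ih =>
    rw [ascProd_succ, Perm.mul_apply, show a + (k + 1) = a + 1 + k by omega, ih]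
    exact swap_apply_right _ _

theorem ascProd_apply_of_lt {a k x : ℕ} (h : a + k < x) : ascProd adjSwap a k x = x := by
  induction k generalizing a with
  | zero => rfl
  | succ k ih =>
    rw [ascProd_succ, Perm.mul_apply, ih (by omega)]
    exact swap_apply_of_ne_of_ne (by omega) (by omega)

end adjSwap

-- `𝔖[m]` is `S_m`, as the permutations of `ℕ` fixing every `x ≥ m`.
local notation "𝔖[" m "]" => fixingSubgroup (Perm ℕ) (Set.Ici m)

theorem mem_fixingSubgroup_Ici {m : ℕ} {π : Perm ℕ} : π ∈ 𝔖[m] ↔ ∀ x, m ≤ x → π x = x := by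
  simp [mem_fixingSubgroup_iff, Perm.smul_def]

theorem adjSwap_mem_fixingSubgroup_Ici {i m : ℕ} (h : i + 1 < m) : adjSwap i ∈ 𝔖[m] :=
  mem_fixingSubgroup_Ici.2 fun _ _ => swap_apply_of_ne_of_ne (by omega) (by omega)

theorem apply_le_of_mem_fixingSubgroup_Ici {t : ℕ} {π : Perm ℕ} (hπ : π ∈ 𝔖[t + 1]) :
    π t ≤ t := by
  by_contra! h
  have := π.injective (mem_fixingSubgroup_Ici.1 hπ (π t) h)
  omega

/-- The cycle `s_{π t} ⋯ s_{t-1}` sends `t` to `π t` and fixes everything above `t`. -/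
theorem ascProd_adjSwap_inv_mul_mem {t : ℕ} {π : Perm ℕ} (hπ : π ∈ 𝔖[t + 1]) :
    (ascProd adjSwap (π t) (t - π t))⁻¹ * π ∈ 𝔖[t] := by
  have hle := apply_le_of_mem_fixingSubgroup_Ici hπ
  refine mem_fixingSubgroup_Ici.2 fun x hx => ?_
  rw [Perm.mul_apply, Perm.inv_eq_iff_eq]
  rcases hx.eq_or_lt with rfl | hx
  · simpa [Nat.add_sub_cancel' hle] using (adjSwap.ascProd_apply_add (π t) (t - π t)).symm
  · rw [mem_fixingSubgroup_Ici.1 hπ x (by omega), adjSwap.ascProd_apply_of_lt (by omega)]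

theorem closure_adjSwap (m : ℕ) :
    Submonoid.closure {σ | ∃ i, i + 1 < m ∧ adjSwap i = σ} = 𝔖[m].toSubmonoid := by
  refine le_antisymm (Submonoid.closure_le.2 ?_) fun π hπ => ?_
  · rintro _ ⟨i, hi, rfl⟩
    exact adjSwap_mem_fixingSubgroup_Ici hi
  induction m generalizing π with
  | zero =>
    rw [show π = 1 from Equiv.ext fun x => mem_fixingSubgroup_Ici.1 hπ x x.zero_le]
    exact one_mem _
  | succ t ih =>
    rw [← mul_inv_cancel_left (ascProd adjSwap (π t) (t - π t)) π]
    have hle := apply_le_of_mem_fixingSubgroup_Ici hπ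
    refine mul_mem (ascProd_mem fun j _ hj => Submonoid.subset_closure ⟨j, by omega, rfl⟩) ?_
    refine Submonoid.closure_mono ?_ (ih _ (ascProd_adjSwap_inv_mul_mem hπ))
    rintro _ ⟨i, hi, rfl⟩
    exact ⟨i, by omega, rfl⟩

section LiftPerm

variable {G : Type*} [Monoid G] {f : ℕ → G}

/-- Reads `π = c * π'`, with `c = s_a ⋯ s_{m-1}` the cycle taking `m` to `a = π m` and `π'`
fixing `m`, as a word in the `s_i = adjSwap i`, and evaluates it with `s_i ↦ f i`. -/
def liftPerm (f : ℕ → G) : ℕ → Perm ℕ → G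
  | 0, _ => 1
  | m + 1, π =>
    ascProd f (π m) (m - π m) * liftPerm f m ((ascProd adjSwap (π m) (m - π m))⁻¹ * π)

theorem liftPerm_succ (f : ℕ → G) (m : ℕ) (π : Perm ℕ) :
    liftPerm f (m + 1) π =
      ascProd f (π m) (m - π m) * liftPerm f m ((ascProd adjSwap (π m) (m - π m))⁻¹ * π) :=
  rfl

@[simp]
theorem liftPerm_one (f : ℕ → G) (m : ℕ) : liftPerm f m 1 = 1 := by
  induction m with
  | zero => rfl
  | succ m ih => simp [liftPerm_succ, ih]

theorem liftPerm_succ_adjSwap_mul_of_apply_eq (hf : ∀ i, f i * f i = 1) {t i : ℕ} {π : Perm ℕ}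
    (hπ : π t = i) (hi : i < t) :
    liftPerm f (t + 1) (adjSwap i * π) = f i * liftPerm f (t + 1) π := by
  obtain ⟨k, rfl⟩ : ∃ k, t = i + 1 + k := ⟨t - (i + 1), by omega⟩
  have hs : (adjSwap i * π) (i + 1 + k) = i + 1 := by
    rw [Perm.mul_apply, hπ]
    exact swap_apply_left _ _
  rw [liftPerm_succ, liftPerm_succ, hs, hπ, show i + 1 + k - (i + 1) = k by omega,
    show i + 1 + k - i = k + 1 by omega, ascProd_succ, ascProd_succ, mul_inv_rev, adjSwap.inv,
    mul_assoc _ (adjSwap i)]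
  simp only [← mul_assoc, hf, one_mul]

/-- The cases where `s_i` fixes `π t` and passes through the cycle `s_{π t} ⋯ s_{t-1}` as `s_j`. -/
theorem liftPerm_succ_adjSwap_mul_of_mul_eq {t i j : ℕ} {π : Perm ℕ}
    (hfix : adjSwap i (π t) = π t)
    (hσ : adjSwap i * ascProd adjSwap (π t) (t - π t) =
      ascProd adjSwap (π t) (t - π t) * adjSwap j)
    (hf : f i * ascProd f (π t) (t - π t) = ascProd f (π t) (t - π t) * f j)
    (ih : liftPerm f t (adjSwap j * ((ascProd adjSwap (π t) (t - π t))⁻¹ * π)) =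
      f j * liftPerm f t ((ascProd adjSwap (π t) (t - π t))⁻¹ * π)) :
    liftPerm f (t + 1) (adjSwap i * π) = f i * liftPerm f (t + 1) π := by
  have hconj : (ascProd adjSwap (π t) (t - π t))⁻¹ * (adjSwap i * π) =
      adjSwap j * ((ascProd adjSwap (π t) (t - π t))⁻¹ * π) := by
    rw [inv_mul_eq_iff_eq_mul, ← mul_assoc, ← mul_assoc, ← hσ, mul_inv_cancel_right]
  rw [liftPerm_succ, liftPerm_succ, Perm.mul_apply, hfix, hconj, ih, ← mul_assoc, ← hf, mul_assoc]

theorem liftPerm_adjSwap_mul {N : ℕ} (hf : SymmetricRelations f N) {m : ℕ} (hm : m ≤ N)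
    {π : Perm ℕ} (hπ : π ∈ 𝔖[m]) {i : ℕ} (hi : i + 1 < m) :
    liftPerm f m (adjSwap i * π) = f i * liftPerm f m π := by
  induction m generalizing π i with
  | zero => omega
  | succ t ih =>
    have hle := apply_le_of_mem_fixingSubgroup_Ici hπ
    have ih' := fun {j} (hj : j + 1 < t) => ih (by omega) (ascProd_adjSwap_inv_mul_mem hπ) hj
    by_cases hfar : i + 2 ≤ π t
    · exact liftPerm_succ_adjSwap_mul_of_mul_eq (swap_apply_of_ne_of_ne (by omega) (by omega))
        (commute_ascProd (adjSwap.symmetricRelations 0).commute hfar).eq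
        (commute_ascProd hf.commute hfar).eq (ih' (by omega))
    by_cases hleft : π t = i
    · exact liftPerm_succ_adjSwap_mul_of_apply_eq hf.mul_self hleft (by omega)
    by_cases hright : π t = i + 1
    · have h := liftPerm_succ_adjSwap_mul_of_apply_eq hf.mul_self (i := i) (π := adjSwap i * π)
        (by rw [Perm.mul_apply, hright]; exact swap_apply_right _ _) (by omega)
      rw [← mul_assoc, (adjSwap.symmetricRelations 0).mul_self, one_mul] at h
      rw [h, ← mul_assoc, hf.mul_self, one_mul]
    obtain ⟨j, rfl⟩ : ∃ j, i = j + 1 := ⟨i - 1, by omega⟩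
    exact liftPerm_succ_adjSwap_mul_of_mul_eq (swap_apply_of_ne_of_ne (by omega) (by omega))
      (mul_ascProd_eq_ascProd_mul (adjSwap.symmetricRelations 0).commute (adjSwap.braid j)
        (by omega) (by omega))
      (mul_ascProd_eq_ascProd_mul hf.commute (hf.braid j (by omega)) (by omega) (by omega))
      (ih' (by omega))

theorem liftPerm_adjSwap {N : ℕ} (hf : SymmetricRelations f N) {i : ℕ} (hi : i + 1 < N) :
    liftPerm f N (adjSwap i) = f i := by
  simpa using liftPerm_adjSwap_mul hf le_rfl (one_mem _) hi

theorem liftPerm_mul {N : ℕ} (hf : SymmetricRelations f N) {π σ : Perm ℕ} (hπ : π ∈ 𝔖[N])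
    (hσ : σ ∈ 𝔖[N]) : liftPerm f N (π * σ) = liftPerm f N π * liftPerm f N σ := by
  rw [← Subgroup.mem_toSubmonoid, ← closure_adjSwap] at hπ
  induction hπ using Submonoid.closure_induction_left with
  | one => simp
  | mul_left _ hx π hπ ih =>
    obtain ⟨i, hi, rfl⟩ := hx
    have hπN : π ∈ 𝔖[N] := by rwa [← Subgroup.mem_toSubmonoid, ← closure_adjSwap]
    rw [mul_assoc, liftPerm_adjSwap_mul hf le_rfl (mul_mem hπN hσ) hi, ih,
      liftPerm_adjSwap_mul hf le_rfl hπN hi, mul_assoc]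

def liftPermHom {N : ℕ} (hf : SymmetricRelations f N) : 𝔖[N] →* G where
  toFun π := liftPerm f N π
  map_one' := liftPerm_one f N
  map_mul' π σ := liftPerm_mul hf π.2 σ.2

end LiftPerm

theorem Equiv.Perm.viaEmbedding_swap {α β : Type*} [DecidableEq α] [DecidableEq β] (ι : α ↪ β)
    (a b : α) : (swap a b).viaEmbedding ι = swap (ι a) (ι b) := by
  ext y
  by_cases hy : y ∈ Set.range ι
  · obtain ⟨z, rfl⟩ := hy
    rw [Perm.viaEmbedding_apply, swap_apply_def, swap_apply_def]
    split_ifs <;> simp_all [ι.injective.eq_iff]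
  · rw [Perm.viaEmbedding_apply_of_notMem _ _ _ hy, swap_apply_of_ne_of_ne] <;>
      rintro rfl <;> exact hy ⟨_, rfl⟩

theorem Equiv.Perm.viaEmbeddingHom_valEmbedding_mem (n : ℕ) (π : Perm (Fin n)) :
    Perm.viaEmbeddingHom Fin.valEmbedding π ∈ 𝔖[n] :=
  mem_fixingSubgroup_Ici.2 fun x hx => Perm.viaEmbedding_apply_of_notMem _ _ _
    fun ⟨z, hz⟩ => by have := z.2; simp_all; omega

theorem Equiv.Perm.exists_monoidHom_swap_castSucc_succ {G : Type*} [Monoid G] {n : ℕ}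
    (f : Fin n → G) (mul_self : ∀ i, f i * f i = 1)
    (commute : ∀ i j : Fin n, (i : ℕ) + 2 ≤ j → Commute (f i) (f j))
    (braid : ∀ i j : Fin n, (i : ℕ) + 1 = j → f i * f j * f i = f j * f i * f j) :
    ∃ ρ : Perm (Fin (n + 1)) →* G, ∀ i, ρ (swap i.castSucc i.succ) = f i := by
  let F : ℕ → G := fun j => if h : j < n then f ⟨j, h⟩ else 1
  have hF : SymmetricRelations F (n + 1) := by
    refine ⟨fun i => ?_, fun i j hij => ?_, fun i hi => ?_⟩
    · by_cases hi : i < n <;> simp [F, hi, mul_self]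
    · by_cases hj : j < n
      · simpa [F, hj, show i < n by omega] using commute ⟨i, by omega⟩ ⟨j, hj⟩ hij
      · simp [F, hj]
    · simpa [F, show i < n by omega, show i + 1 < n by omega] using
        braid ⟨i, by omega⟩ ⟨i + 1, by omega⟩ rfl
  refine ⟨(liftPermHom hF).comp ((Perm.viaEmbeddingHom Fin.valEmbedding).codRestrict _
    (Perm.viaEmbeddingHom_valEmbedding_mem _)), fun i => ?_⟩
  change liftPerm F (n + 1) ((swap i.castSucc i.succ).viaEmbedding Fin.valEmbedding) = f i
  rw [Perm.viaEmbedding_swap]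
  simpa [F, adjSwap] using liftPerm_adjSwap hF (i := i) (by omega)

section BraidGroup

variable {m : ℕ}

theorem braidGen_commute {i j : Fin m} (h : (i : ℕ) + 2 ≤ j) :
    Commute (braidGen i) (braidGen j) := by
  have hr := PresentedGroup.one_of_mem (rels := braidRels m) (Or.inl ⟨i, j, h, rfl⟩)
  simp only [map_mul, map_inv] at hr
  rwa [mul_inv_eq_one, mul_inv_eq_iff_eq_mul] at hr

theorem braidGen_braid {i j : Fin m} (h : (i : ℕ) + 1 = j) :
    braidGen i * braidGen j * braidGen i = braidGen j * braidGen i * braidGen j := by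
  have hr := PresentedGroup.one_of_mem (rels := braidRels m) (Or.inr ⟨i, j, h, rfl⟩)
  simp only [map_mul, map_inv] at hr
  rwa [mul_inv_eq_one, mul_inv_eq_iff_eq_mul, mul_inv_eq_iff_eq_mul] at hr

end BraidGroup

namespace Mzeta

variable {k : Type*} [Field k] {m : ℕ} {M : Type*} [AddCommGroup M] [Module k M]
  [DistribMulAction (BraidGroup m) M] [SMulCommClass (BraidGroup m) k M] {ζ : kˣ}

theorem smul_mem (g : BraidGroup m) {x : M} (hx : x ∈ Mzeta k m M ζ) : g • x ∈ Mzeta k m M ζ := by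
  intro φ i
  calc (φ⁻¹ * braidGen i ^ 2 * φ) • g • x = g • ((φ * g)⁻¹ * braidGen i ^ 2 * (φ * g)) • x := by
        rw [← mul_smul, ← mul_smul]
        group
    _ = ((ζ : k) ^ 2) • g • x := by rw [hx (φ * g) i, smul_comm]

variable (k M ζ) in
def braidAction : BraidGroup m →* Module.End k (Mzeta k m M ζ) where
  toFun g := (DistribSMul.toLinearMap k M g).restrict fun _ => smul_mem g
  map_one' := LinearMap.ext fun x => Subtype.ext (one_smul _ (x : M))
  map_mul' g h := LinearMap.ext fun x => Subtype.ext (mul_smul g h (x : M))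

@[simp]
theorem coe_braidAction_apply (g : BraidGroup m) (x : Mzeta k m M ζ) :
    (braidAction k M ζ g x : M) = g • (x : M) :=
  rfl

theorem braidAction_braidGen_mul_self (i : Fin m) :
    braidAction k M ζ (braidGen i) * braidAction k M ζ (braidGen i) = ((ζ : k) ^ 2) • 1 :=
  LinearMap.ext fun x => Subtype.ext <| by simpa [← mul_smul, sq] using x.2 1 i

variable (k M ζ) in
def sigma (i : Fin m) : Module.End k (Mzeta k m M ζ) :=
  ((ζ⁻¹ : kˣ) : k) • braidAction k M ζ (braidGen i)

@[simp]
theorem coe_sigma_apply (i : Fin m) (x : Mzeta k m M ζ) :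
    (sigma k M ζ i x : M) = ((ζ⁻¹ : kˣ) : k) • (braidGen i • (x : M)) :=
  rfl

theorem sigma_mul_self (i : Fin m) : sigma k M ζ i * sigma k M ζ i = 1 := by
  have hζ : ((ζ⁻¹ : kˣ) : k) * ((ζ⁻¹ : kˣ) : k) * (ζ : k) ^ 2 = 1 := by
    rw [Units.val_inv_eq_inv_val]
    field_simp
  rw [sigma, smul_mul_smul_comm, braidAction_braidGen_mul_self, smul_smul, hζ, one_smul]

theorem sigma_commute {i j : Fin m} (h : (i : ℕ) + 2 ≤ j) :
    Commute (sigma k M ζ i) (sigma k M ζ j) :=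
  (((braidGen_commute h).map (braidAction k M ζ)).smul_left _).smul_right _

theorem sigma_braid {i j : Fin m} (h : (i : ℕ) + 1 = j) :
    sigma k M ζ i * sigma k M ζ j * sigma k M ζ i =
      sigma k M ζ j * sigma k M ζ i * sigma k M ζ j := by
  simp only [sigma, smul_mul_smul_comm, ← map_mul, braidGen_braid h]

end Mzeta

/-- For a `k[B_n]`-module `M` and a unit `ζ`, the subspace
`M(ζ) := {m ∈ M | φ⁻¹ τ_i² φ (m) = ζ² m  ∀ φ ∈ B_n, i}` is a `k[B_n]`-submodule of `M`
(it is a `k`-subspace by construction, and it is stable under the `B_n`-action), and the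
formulas `σ_i (m) := ζ⁻¹ τ_i (m)` define a `k[S_n]`-module structure on `M(ζ)`. -/
theorem stmt6 (k : Type*) [Field k] (n : ℕ) (M : Type*) [AddCommGroup M]
    [Module k M] [DistribMulAction (BraidGroup (n - 1)) M]
    [SMulCommClass (BraidGroup (n - 1)) k M] (ζ : kˣ) :
    (∀ (g : BraidGroup (n - 1)) (x : M), x ∈ Mzeta k (n - 1) M ζ → g • x ∈ Mzeta k (n - 1) M ζ) ∧
    ∃ ρ : Equiv.Perm (Fin n) →* Module.End k (Mzeta k (n - 1) M ζ),
      ∀ (i : Fin (n - 1)) (x : Mzeta k (n - 1) M ζ),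
        (ρ (Equiv.swap (⟨i.1, by have := i.2; omega⟩ : Fin n)
            ⟨i.1 + 1, by have := i.2; omega⟩) x : M) =
          ((ζ⁻¹ : kˣ) : k) • (braidGen i • (x : M)) := by
  refine ⟨fun g _ => Mzeta.smul_mem (m := n - 1) g, ?_⟩
  cases n with
  | zero => exact ⟨1, fun i => i.elim0⟩
  | succ n =>
    obtain ⟨ρ, hρ⟩ := Perm.exists_monoidHom_swap_castSucc_succ
      (Mzeta.sigma k M ζ (m := n + 1 - 1)) Mzeta.sigma_mul_self
      (fun _ _ => Mzeta.sigma_commute) (fun _ _ => Mzeta.sigma_braid)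
    exact ⟨ρ, fun i x => by rw [← Mzeta.coe_sigma_apply, ← hρ]; rfl⟩
end

section
/- For a k[B_n]-module M and a unit ζ, the subspace M(ζ) = {m ∈ M | φ⁻¹τ_i²φ(m) = ζ²m for all φ, i} coincides with {m ∈ M | τ_i⁻¹τ_{i+1}⁻¹···τ_{j−1}⁻¹ τ_j² τ_{j−1}···τ_{i+1}τ_i (m) = ζ²m for all 1 ≤ i ≤ j ≤ n−1}. -/
/-- The generator `τ_{i+1}` of the braid group, indexed by a natural number `i < m`
(and defined to be `1` out of range). -/
def braidGenNat (m : ℕ) (i : ℕ) : BraidGroup m := if h : i < m then braidGen ⟨i, h⟩ else 1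

namespace Subgroup

variable {G : Type*} [Group G] {S : Set G}

variable (S) in
def closureConjugates : Set G := {g | ∃ h ∈ closure S, ∃ s ∈ S, g = h * s * h⁻¹}

lemma subset_closureConjugates : S ⊆ closureConjugates S :=
  fun s hs => ⟨1, one_mem _, s, hs, by group⟩

lemma closureConjugates_subset_closure : closureConjugates S ⊆ closure S := by
  rintro _ ⟨h, hh, s, hs, rfl⟩
  exact mul_mem (mul_mem hh (subset_closure hs)) (inv_mem hh)

lemma conj_mem_closureConjugates {h g : G} (hh : h ∈ closure S) (hg : g ∈ closureConjugates S) :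
    h * g * h⁻¹ ∈ closureConjugates S := by
  obtain ⟨h', hh', s, hs, rfl⟩ := hg
  exact ⟨h * h', mul_mem hh hh', s, hs, by group⟩

lemma conj_mem_closureConjugates_iff {a g : G} (ha : a ^ 2 ∈ closure S) :
    a * g * a⁻¹ ∈ closureConjugates S ↔ a⁻¹ * g * a ∈ closureConjugates S := by
  constructor <;> intro hg
  · convert conj_mem_closureConjugates (inv_mem ha) hg using 1; group
  · convert conj_mem_closureConjugates ha hg using 1; group

lemma conj_mem_closure_of_forall {a g : G} (hS : ∀ s ∈ S, a * s * a⁻¹ ∈ closure S)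
    (hg : g ∈ closure S) : a * g * a⁻¹ ∈ closure S := by
  have hmap : (closure S).map (MulAut.conj a).toMonoidHom ≤ closure S := by
    rw [MonoidHom.map_closure, closure_le]
    rintro _ ⟨s, hs, rfl⟩
    exact hS s hs
  exact hmap ⟨g, hg, rfl⟩

lemma conj_mem_closureConjugates_of_forall {a g : G}
    (hS : ∀ s ∈ S, a * s * a⁻¹ ∈ closureConjugates S) (hg : g ∈ closureConjugates S) :
    a * g * a⁻¹ ∈ closureConjugates S := by
  obtain ⟨h, hh, s, hs, rfl⟩ := hg
  have hah : a * h * a⁻¹ ∈ closure S :=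
    conj_mem_closure_of_forall (fun s hs => closureConjugates_subset_closure (hS s hs)) hh
  convert conj_mem_closureConjugates hah (hS s hs) using 1
  group

lemma mem_normalizer_closureConjugates {a : G} (ha : a ^ 2 ∈ closure S)
    (hS : ∀ s ∈ S, a * s * a⁻¹ ∈ closureConjugates S) :
    a ∈ normalizer (closureConjugates S) := by
  have hS' : ∀ s ∈ S, a⁻¹ * s * a⁻¹⁻¹ ∈ closureConjugates S := fun s hs => by
    rw [inv_inv, ← conj_mem_closureConjugates_iff ha]
    exact hS s hs
  refine fun g => ⟨conj_mem_closureConjugates_of_forall hS, fun hg => ?_⟩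
  convert conj_mem_closureConjugates_of_forall hS' hg using 1
  group

lemma normalizer_closureConjugates_eq_top {A : Set G} (hA : closure A = ⊤)
    (hsq : ∀ a ∈ A, a ^ 2 ∈ closure S) (hS : ∀ a ∈ A, ∀ s ∈ S, a * s * a⁻¹ ∈ closureConjugates S) :
    normalizer (closureConjugates S) = ⊤ := by
  rw [eq_top_iff, ← hA, closure_le]
  exact fun a ha => mem_normalizer_closureConjugates (hsq a ha) (hS a ha)

end Subgroup

section LineStabilizer

variable {G : Type*} [Group G] {k : Type*} [CommMonoid k] {M : Type*} [MulAction k M]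
  [MulAction G M] [SMulCommClass G k M]

lemma inv_smul_eq_of_smul_eq {g : G} {x : M} {u : kˣ} (hg : g • x = (u : k) • x) :
    g⁻¹ • x = ((u⁻¹ : kˣ) : k) • x := by
  rw [inv_smul_eq_iff, smul_comm, hg, smul_smul, Units.inv_mul, one_smul]

variable (G k) in
def lineStabilizer (x : M) : Subgroup G where
  carrier := {g | ∃ u : kˣ, g • x = (u : k) • x}
  one_mem' := ⟨1, by simp⟩
  mul_mem' := by
    rintro g h ⟨u, hu⟩ ⟨v, hv⟩
    exact ⟨v * u, by rw [mul_smul, hv, smul_comm, hu, smul_smul, Units.val_mul]⟩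
  inv_mem' := by
    rintro g ⟨u, hu⟩
    exact ⟨u⁻¹, inv_smul_eq_of_smul_eq hu⟩

lemma conj_smul_eq_of_mem_lineStabilizer {x : M} {g h : G} {c : k}
    (hh : h ∈ lineStabilizer G k x) (hg : g • x = c • x) : (h * g * h⁻¹) • x = c • x := by
  obtain ⟨u, hu⟩ := hh
  rw [mul_smul, mul_smul, smul_eq_iff_eq_inv_smul, inv_smul_eq_of_smul_eq hu, smul_comm g, hg,
    smul_comm h⁻¹, inv_smul_eq_of_smul_eq hu, smul_smul, smul_smul, mul_comm]

lemma smul_eq_of_mem_closureConjugates {S : Set G} {x : M} {c : kˣ}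
    (hS : ∀ s ∈ S, s • x = (c : k) • x) {g : G} (hg : g ∈ Subgroup.closureConjugates S) :
    g • x = (c : k) • x := by
  obtain ⟨h, hh, s, hs, rfl⟩ := hg
  have hle : Subgroup.closure S ≤ lineStabilizer G k x :=
    (Subgroup.closure_le _).2 fun s hs => ⟨c, hS s hs⟩
  exact conj_smul_eq_of_mem_lineStabilizer (hle hh) (hS s hs)

end LineStabilizer

lemma Commute.conj_conj_inv {G : Type*} [Group G] {a w : G} (h : Commute a w) (x : G) :
    a * (w⁻¹ * x * w) * a⁻¹ = w⁻¹ * (a * x * a⁻¹) * w := by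
  simp only [mul_assoc, h.inv_left.eq]
  exact h.inv_right.left_comm _

lemma conj_sq_eq_of_braid_rel {G : Type*} [Group G] {a b : G} (h : a * b * a = b * a * b) :
    b * a ^ 2 * b⁻¹ = a⁻¹ * b ^ 2 * a := by
  rw [mul_inv_eq_iff_eq_mul, mul_assoc, mul_assoc, eq_inv_mul_iff_mul_eq]
  calc a * (b * a ^ 2) = a * b * a * a := by simp only [pow_two, mul_assoc]
    _ = b * (a * b * a) := by nth_rw 1 [h]; simp only [mul_assoc]
    _ = b ^ 2 * (a * b) := by rw [h]; simp only [pow_two, mul_assoc]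

namespace BraidGroup

open Subgroup

variable {m : ℕ}

local notation "σ" => braidGenNat m

lemma braidGenNat_of_lt {i : ℕ} (h : i < m) : σ i = braidGen ⟨i, h⟩ := dif_pos h

lemma braidGenNat_of_le {i : ℕ} (h : m ≤ i) : σ i = 1 := dif_neg h.not_gt

lemma commute_braidGenNat_of_add_two_le {a b : ℕ} (h : a + 2 ≤ b) : Commute (σ a) (σ b) := by
  rcases lt_or_ge b m with hb | hb
  · have hrel := PresentedGroup.one_of_mem (rels := braidRels m)
      (Or.inl ⟨⟨a, by omega⟩, ⟨b, hb⟩, h, rfl⟩)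
    simp only [map_mul, map_inv] at hrel
    rw [braidGenNat_of_lt (by omega : a < m), braidGenNat_of_lt hb]
    rwa [mul_inv_eq_one, mul_inv_eq_iff_eq_mul] at hrel
  · rw [braidGenNat_of_le hb]
    exact Commute.one_right _

lemma commute_braidGenNat {a b : ℕ} (h : a + 2 ≤ b ∨ b + 2 ≤ a) : Commute (σ a) (σ b) :=
  h.elim commute_braidGenNat_of_add_two_le fun h => (commute_braidGenNat_of_add_two_le h).symm

lemma braidGenNat_braid_rel {a : ℕ} (h : a + 1 < m) :
    σ a * σ (a + 1) * σ a = σ (a + 1) * σ a * σ (a + 1) := by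
  have hrel := PresentedGroup.one_of_mem (rels := braidRels m)
    (Or.inr ⟨⟨a, by omega⟩, ⟨a + 1, h⟩, rfl, rfl⟩)
  simp only [map_mul, map_inv] at hrel
  rw [braidGenNat_of_lt (by omega : a < m), braidGenNat_of_lt h]
  rwa [mul_inv_eq_one, mul_inv_eq_iff_eq_mul, mul_inv_eq_iff_eq_mul] at hrel

variable (m) in
def descProd (i j : ℕ) : BraidGroup m := ((List.Ico i j).map σ).reverse.prod

variable (m) in
def pureGen (i j : ℕ) : BraidGroup m := (descProd m i j)⁻¹ * σ j ^ 2 * descProd m i j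

variable (m) in
def pureGens : Set (BraidGroup m) := {g | ∃ i j, i ≤ j ∧ j < m ∧ g = pureGen m i j}

lemma descProd_self (i : ℕ) : descProd m i i = 1 := by simp [descProd]

lemma descProd_eq_descProd_mul {i j : ℕ} (h : i < j) :
    descProd m i j = descProd m (i + 1) j * σ i := by
  rw [descProd, descProd, List.Ico.eq_cons h]
  simp

lemma descProd_succ {i j : ℕ} (h : i ≤ j) : descProd m i (j + 1) = σ j * descProd m i j := by
  rw [descProd, descProd, List.Ico.succ_top h]
  simp

lemma descProd_eq_mul {i t j : ℕ} (h₁ : i ≤ t) (h₂ : t ≤ j) :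
    descProd m i j = descProd m t j * descProd m i t := by
  rw [descProd, descProd, descProd, ← List.Ico.append_consecutive h₁ h₂]
  simp

lemma commute_descProd {s i j : ℕ} (h : ∀ t, i ≤ t → t < j → Commute (σ s) (σ t)) :
    Commute (σ s) (descProd m i j) := by
  refine Commute.list_prod_right _ _ fun y hy => ?_
  obtain ⟨t, ht, rfl⟩ := List.mem_map.1 (List.mem_reverse.1 hy)
  exact h t (List.Ico.mem.1 ht).1 (List.Ico.mem.1 ht).2

lemma descProd_mul_braidGenNat {i t j : ℕ} (h₁ : i ≤ t) (h₂ : t + 1 < j) (hj : j ≤ m) :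
    descProd m i j * σ (t + 1) = σ t * descProd m i j := by
  have c₁ : Commute (σ (t + 1)) (descProd m i t) :=
    commute_descProd fun u _ hu => commute_braidGenNat (by omega)
  have c₂ : Commute (σ t) (descProd m (t + 2) j) :=
    commute_descProd fun u hu _ => commute_braidGenNat (by omega)
  rw [descProd_eq_mul (show i ≤ t + 2 by omega) (show t + 2 ≤ j by omega),
    descProd_succ (show i ≤ t + 1 by omega), descProd_succ h₁]
  calc descProd m (t + 2) j * (σ (t + 1) * (σ t * descProd m i t)) * σ (t + 1)
      = descProd m (t + 2) j * (σ (t + 1) * σ t * σ (t + 1)) * descProd m i t := by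
        simp only [mul_assoc]; rw [← c₁.eq]
    _ = descProd m (t + 2) j * (σ t * σ (t + 1) * σ t) * descProd m i t := by
        rw [braidGenNat_braid_rel (by omega)]
    _ = σ t * (descProd m (t + 2) j * (σ (t + 1) * (σ t * descProd m i t))) := by
        simp only [mul_assoc]; exact (c₂.left_comm _).symm

lemma pureGen_self (i : ℕ) : pureGen m i i = σ i ^ 2 := by simp [pureGen, descProd_self]

lemma conj_pureGen_of_lt {i j : ℕ} (h : i < j) :
    σ i * pureGen m i j * (σ i)⁻¹ = pureGen m (i + 1) j := by
  rw [pureGen, pureGen, descProd_eq_descProd_mul h]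
  group

lemma conj_pureGen_succ {i j : ℕ} (h : i ≤ j) (hj : j + 1 < m) :
    σ (j + 1) * pureGen m i j * (σ (j + 1))⁻¹ = pureGen m i (j + 1) := by
  have c : Commute (σ (j + 1)) (descProd m i j) :=
    commute_descProd fun t _ ht => commute_braidGenNat (by omega)
  rw [pureGen, pureGen, descProd_succ h, c.conj_conj_inv,
    conj_sq_eq_of_braid_rel (braidGenNat_braid_rel hj)]
  group

lemma commute_pureGen_of_far {s i j : ℕ} (hij : i ≤ j) (h : s + 2 ≤ i ∨ j + 2 ≤ s) :
    Commute (σ s) (pureGen m i j) := by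
  have hw : Commute (σ s) (descProd m i j) :=
    commute_descProd fun t hit htj => commute_braidGenNat (by omega)
  have hj : Commute (σ s) (σ j) := commute_braidGenNat (by omega)
  exact (hw.inv_right.mul_right (hj.pow_right 2)).mul_right hw

lemma commute_pureGen_of_lt_of_lt {i s j : ℕ} (h₁ : i < s) (h₂ : s < j) (hj : j < m) :
    Commute (σ s) (pureGen m i j) := by
  obtain ⟨t, rfl⟩ : ∃ t, s = t + 1 := ⟨s - 1, by omega⟩
  have e : σ (t + 1) = (descProd m i j)⁻¹ * σ t * descProd m i j := by
    rw [mul_assoc, eq_inv_mul_iff_mul_eq, descProd_mul_braidGenNat (by omega) h₂ hj.le]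
  have hc := ((commute_braidGenNat (m := m) (a := t) (b := j) (by omega)).pow_right 2).map
    (MulAut.conj (descProd m i j)⁻¹)
  simpa [MulAut.conj_apply, e, pureGen, mul_assoc] using hc

lemma braidGen_sq_mem_pureGens (i : Fin m) : braidGen i ^ 2 ∈ pureGens m :=
  ⟨i, i, le_rfl, i.isLt, by rw [pureGen_self, braidGenNat_of_lt i.isLt]⟩

lemma conj_pureGen_mem_closureConjugates {s i j : ℕ} (hs : s < m) (hij : i ≤ j) (hj : j < m) :
    σ s * pureGen m i j * (σ s)⁻¹ ∈ closureConjugates (pureGens m) := by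
  have hsq : σ s ^ 2 ∈ closure (pureGens m) :=
    subset_closure (braidGenNat_of_lt hs ▸ braidGen_sq_mem_pureGens ⟨s, hs⟩)
  have mem {a b : ℕ} (hab : a ≤ b) (hb : b < m) : pureGen m a b ∈ closureConjugates (pureGens m) :=
    subset_closureConjugates ⟨a, b, hab, hb, rfl⟩
  have of_commute (hc : Commute (σ s) (pureGen m i j)) :
      σ s * pureGen m i j * (σ s)⁻¹ ∈ closureConjugates (pureGens m) := by
    rw [hc.eq, mul_inv_cancel_right]
    exact mem hij hj
  -- `τ_s² = T s s`, so conjugating by `τ_s⁻¹` instead of `τ_s` is equivalent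
  rcases (show (s + 2 ≤ i ∨ j + 2 ≤ s) ∨ (s = i ∧ s = j) ∨ (i < s ∧ s < j) ∨ s + 1 = i ∨
      (s = i ∧ i < j) ∨ (s = j ∧ i < j) ∨ s = j + 1 by omega) with
    h | ⟨rfl, rfl⟩ | ⟨h₁, h₂⟩ | rfl | ⟨rfl, h⟩ | ⟨rfl, h⟩ | rfl
  · exact of_commute (commute_pureGen_of_far hij h)
  · exact of_commute (by rw [pureGen_self]; exact (Commute.refl _).pow_right 2)
  · exact of_commute (commute_pureGen_of_lt_of_lt h₁ h₂ hj)
  · rw [conj_mem_closureConjugates_iff hsq, ← conj_pureGen_of_lt (show s < j by omega)]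
    convert mem (show s ≤ j by omega) hj using 1
    group
  · rw [conj_pureGen_of_lt h]
    exact mem h hj
  · obtain ⟨t, rfl⟩ : ∃ t, s = t + 1 := ⟨s - 1, by omega⟩
    rw [conj_mem_closureConjugates_iff hsq, ← conj_pureGen_succ (show i ≤ t by omega) hj]
    convert mem (show i ≤ t by omega) (show t < m by omega) using 1
    group
  · rw [conj_pureGen_succ hij hs]
    exact mem (by omega) hs

lemma normalizer_closureConjugates_pureGens :
    normalizer (closureConjugates (pureGens m)) = ⊤ := by
  refine normalizer_closureConjugates_eq_top (PresentedGroup.closure_range_of _) ?_ ?_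
  · rintro _ ⟨s, rfl⟩
    exact subset_closure (braidGen_sq_mem_pureGens s)
  · rintro _ ⟨s, rfl⟩ _ ⟨i, j, hij, hj, rfl⟩
    have := conj_pureGen_mem_closureConjugates s.isLt hij hj
    rwa [braidGenNat_of_lt s.isLt] at this

lemma conj_braidGen_sq_mem_closureConjugates (φ : BraidGroup m) (i : Fin m) :
    φ⁻¹ * braidGen i ^ 2 * φ ∈ closureConjugates (pureGens m) := by
  have hφ : φ⁻¹ ∈ normalizer (closureConjugates (pureGens m)) := by
    rw [normalizer_closureConjugates_pureGens]
    exact mem_top _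
  simpa using (hφ _).1 (subset_closureConjugates (braidGen_sq_mem_pureGens i))

end BraidGroup

theorem stmt10_general (k : Type*) [Field k] (n : ℕ) (M : Type*) [AddCommGroup M]
    [Module k M] [DistribMulAction (BraidGroup (n - 1)) M]
    [SMulCommClass (BraidGroup (n - 1)) k M] (ζ : kˣ) :
    (Mzeta k (n - 1) M ζ : Set M) =
      {x : M | ∀ i j : ℕ, i ≤ j → j < n - 1 →
        ((((List.Ico i j).map (braidGenNat (n - 1))).reverse.prod)⁻¹ *
            braidGenNat (n - 1) j ^ 2 *
            (((List.Ico i j).map (braidGenNat (n - 1))).reverse.prod)) • x =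
          ((ζ : k) ^ 2) • x} := by
  ext x
  constructor
  · intro hx i j hij hj
    have := hx (BraidGroup.descProd (n - 1) i j) ⟨j, hj⟩
    rwa [← BraidGroup.braidGenNat_of_lt hj] at this
  · intro hx φ i
    have hS : ∀ s ∈ BraidGroup.pureGens (n - 1), s • x = ((ζ ^ 2 : kˣ) : k) • x := by
      rintro _ ⟨i, j, hij, hj, rfl⟩
      simpa [BraidGroup.pureGen, BraidGroup.descProd] using hx i j hij hj
    simpa using smul_eq_of_mem_closureConjugates hS
      (BraidGroup.conj_braidGen_sq_mem_closureConjugates φ i)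

/-- For a `k[B_n]`-module `M` and a unit `ζ`, the subspace
`M(ζ) = {m | φ⁻¹ τ_i² φ (m) = ζ² m ∀ φ, i}` coincides with
`{m | τ_i⁻¹ τ_{i+1}⁻¹ ⋯ τ_{j-1}⁻¹ τ_j² τ_{j-1} ⋯ τ_{i+1} τ_i (m) = ζ² m for all
1 ≤ i ≤ j ≤ n−1}`.  Here (with `0`-indexed generators `braidGenNat (n-1) 0, …`)
`τ_{j-1} ⋯ τ_i` is the product of the generators with indices in `[i, j)` in descending
order. -/
theorem stmt10 (k : Type*) [Field k] (n : ℕ) (hn : 2 ≤ n) (M : Type*) [AddCommGroup M]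
    [Module k M] [DistribMulAction (BraidGroup (n - 1)) M]
    [SMulCommClass (BraidGroup (n - 1)) k M] (ζ : kˣ) :
    (Mzeta k (n - 1) M ζ : Set M) =
      {x : M | ∀ i j : ℕ, i ≤ j → j < n - 1 →
        ((((List.Ico i j).map (braidGenNat (n - 1))).reverse.prod)⁻¹ *
            braidGenNat (n - 1) j ^ 2 *
            (((List.Ico i j).map (braidGenNat (n - 1))).reverse.prod)) • x =
          ((ζ : k) ^ 2) • x} :=
  stmt10_general k n M ζ
end

section
/- If ζ is a primitive n-th root of unity in a field k and 0 < i < n, then Σ_{t≥0} p(i, n−i, t)·ζ^{−t} = 0, i.e., the Gaussian binomial coefficient C(n, i)_q vanishes at q = ζ⁻¹. -/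
/-!
The Gaussian binomial `[i + j, i]_q` is `∑ q ^ (m.sum)` over multisets `m` of `j` elements
of `{0, …, i}`; padding a partition in an `i × j` box with zeros to exactly `j` parts identifies
the sum in the theorem with this model at `q = ζ⁻¹`. Splitting the multisets according to
whether they contain `i`, resp. `0`, gives both `q`-Pascal recurrences, and eliminating between
them yields `(1 - q ^ i) [i + j, i]_q = (1 - q ^ (i + j)) [i + j - 1, i - 1]_q`. At a primitive
`n`-th root with `i + j = n` the right side vanishes while `q ^ i ≠ 1`.
-/

open Finset

theorem Finset.sum_sym_insert {α M : Type*} [DecidableEq α] [AddCommMonoid M] {s : Finset α}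
    {a : α} (ha : a ∉ s) (n : ℕ) (f : Sym α (n + 1) → M) :
    ∑ m ∈ (insert a s).sym (n + 1), f m
      = ∑ m ∈ s.sym (n + 1), f m + ∑ m ∈ (insert a s).sym n, f (a ::ₛ m) := by
  rw [← sum_filter_not_add_sum_filter _ (a ∈ ·)]
  congr 1
  · congr 1
    ext m
    simp only [mem_filter, mem_sym_iff, mem_insert]
    exact ⟨fun ⟨h, hm⟩ b hb => (h b hb).resolve_left (by rintro rfl; exact hm hb),
      fun h => ⟨fun b hb => .inr (h b hb), fun hm => ha (h a hm)⟩⟩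
  · have hmem : ((insert a s).sym (n + 1)).filter (a ∈ ·)
        = ((insert a s).sym n).image (Sym.cons a) := by
      ext m
      simp only [mem_filter, mem_image, mem_sym_iff]
      constructor
      · rintro ⟨h, hm⟩
        obtain ⟨m', rfl⟩ := Sym.exists_cons_of_mem hm
        exact ⟨m', fun b hb => h b (Sym.mem_cons_of_mem hb), rfl⟩
      · rintro ⟨m', h, rfl⟩
        exact ⟨fun b hb => (Sym.mem_cons.mp hb).elim (· ▸ mem_insert_self a s) (h b),
          Sym.mem_cons_self a m'⟩
    rw [hmem, sum_image fun _ _ _ _ h => (Sym.cons_inj_right a _ _).mp h]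

theorem Multiset.filter_ne_add_replicate_count {α : Type*} [DecidableEq α] (s : Multiset α)
    (a : α) : s.filter (· ≠ a) + replicate (s.count a) a = s := by
  rw [← filter_eq', add_comm]
  convert filter_add_not (· = a) s

def Nat.Partition.boxEquiv (i j t : ℕ) :
    {p : t.Partition // Multiset.card p.parts ≤ j ∧ ∀ x ∈ p.parts, x ≤ i} ≃
      {m // m ∈ ((range (i + 1)).sym j).filter fun m : Sym ℕ j => (m : Multiset ℕ).sum = t}
    where
  toFun p := ⟨⟨p.1.parts + .replicate (j - Multiset.card p.1.parts) 0, by simp [p.2.1]⟩, by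
    refine mem_filter.mpr ⟨mem_sym_iff.mpr fun x hx => ?_, by simp [p.1.parts_sum]⟩
    rcases Multiset.mem_add.mp hx with hx | hx
    · exact mem_range_succ_iff.mpr (p.2.2 x hx)
    · simp [Multiset.eq_of_mem_replicate hx]⟩
  invFun m := ⟨.ofSums t m (mem_filter.mp m.2).2, by
    refine ⟨(Multiset.card_le_card (Multiset.filter_le _ _)).trans_eq m.1.2, fun x hx => ?_⟩
    exact mem_range_succ_iff.mp
      (mem_sym_iff.mp (mem_filter.mp m.2).1 x (Multiset.mem_of_mem_filter hx))⟩
  left_inv p := by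
    refine Subtype.ext (Nat.Partition.ext ?_)
    change Multiset.filter (· ≠ 0) (p.1.parts + _) = p.1.parts
    rw [Multiset.filter_add, Multiset.filter_eq_self.mpr fun x hx => (p.1.parts_pos hx).ne',
      Multiset.filter_eq_nil.mpr fun x hx => by simp [Multiset.eq_of_mem_replicate hx], add_zero]
  right_inv m := by
    refine Subtype.ext (Sym.ext ?_)
    have h := Multiset.filter_ne_add_replicate_count (m : Multiset ℕ) 0
    have hcard := congrArg Multiset.card h
    rw [Multiset.card_add, Multiset.card_replicate, Sym.card_coe] at hcard
    change Multiset.filter (· ≠ 0) (m : Multiset ℕ)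
      + .replicate (j - Multiset.card (Multiset.filter (· ≠ 0) (m : Multiset ℕ))) 0 = m
    rwa [show j - _ = Multiset.count 0 (m : Multiset ℕ) by omega]

theorem Nat.Partition.card_box (i j t : ℕ) :
    Nat.card {p : t.Partition // Multiset.card p.parts ≤ j ∧ ∀ x ∈ p.parts, x ≤ i}
      = #(((range (i + 1)).sym j).filter fun m : Sym ℕ j => (m : Multiset ℕ).sum = t) := by
  rw [Nat.card_congr (boxEquiv i j t), Nat.card_eq_finsetCard]

section CommSemiring

variable {R : Type*} [CommSemiring R] (q : R)

def gaussianBinomial (i j : ℕ) : R :=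
  ∑ m ∈ (range (i + 1)).sym j, q ^ (m : Multiset ℕ).sum

@[simp]
theorem gaussianBinomial_zero_right (i : ℕ) : gaussianBinomial q i 0 = 1 := by
  rw [gaussianBinomial, sym_zero, sum_singleton]
  exact pow_zero q

theorem gaussianBinomial_succ_succ (i j : ℕ) :
    gaussianBinomial q (i + 1) (j + 1)
      = gaussianBinomial q i (j + 1) + q ^ (i + 1) * gaussianBinomial q (i + 1) j := by
  rw [gaussianBinomial, range_add_one, sum_sym_insert (by simp), gaussianBinomial,
    gaussianBinomial, ← range_add_one, mul_sum]
  simp only [Sym.coe_cons, Multiset.sum_cons, pow_add]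

theorem gaussianBinomial_succ_succ' (i j : ℕ) :
    gaussianBinomial q (i + 1) (j + 1)
      = gaussianBinomial q (i + 1) j + q ^ (j + 1) * gaussianBinomial q i (j + 1) := by
  rw [gaussianBinomial, range_add_one', sum_sym_insert (by simp), add_comm, gaussianBinomial,
    gaussianBinomial, ← range_add_one', sym_map, sum_map, mul_sum]
  congr 1
  · simp [Sym.coe_cons]
  · refine sum_congr rfl fun m _ => ?_
    have hshift : ((m : Multiset ℕ).map (· + 1)).sum = (m : Multiset ℕ).sum + (j + 1) := by
      simp [Multiset.sum_map_add, add_comm]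
    change q ^ ((m : Multiset ℕ).map (· + 1)).sum = _
    rw [hshift, pow_add, mul_comm]

theorem gaussianBinomial_eq_sum_card_box (i j : ℕ) :
    gaussianBinomial q i j = ∑ t ∈ range (i * j + 1),
      (Nat.card {p : t.Partition // Multiset.card p.parts ≤ j ∧ ∀ x ∈ p.parts, x ≤ i} : R)
        * q ^ t := by
  have hsum : ∀ m ∈ (range (i + 1)).sym j, (m : Multiset ℕ).sum ∈ range (i * j + 1) := by
    intro m hm
    have hle := Multiset.sum_le_card_nsmul (m : Multiset ℕ) i fun x hx =>
      mem_range_succ_iff.mp (mem_sym_iff.mp hm x hx)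
    rw [Sym.card_coe, smul_eq_mul] at hle
    exact mem_range_succ_iff.mpr (hle.trans_eq (mul_comm j i))
  rw [gaussianBinomial, ← sum_fiberwise_of_maps_to hsum]
  refine sum_congr rfl fun t _ => ?_
  rw [sum_congr rfl fun m hm => by rw [(mem_filter.mp hm).2], sum_const, Nat.Partition.card_box,
    nsmul_eq_mul]

end CommSemiring

section CommRing

variable {R : Type*} [CommRing R] (q : R)

theorem one_sub_pow_mul_gaussianBinomial (i j : ℕ) :
    (1 - q ^ (i + 1)) * gaussianBinomial q (i + 1) j
      = (1 - q ^ (i + 1 + j)) * gaussianBinomial q i j := by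
  cases j with
  | zero => simp
  | succ j =>
    linear_combination gaussianBinomial_succ_succ q i j
      - q ^ (i + 1) * gaussianBinomial_succ_succ' q i j

theorem IsPrimitiveRoot.gaussianBinomial_eq_zero [IsDomain R] {q : R} {n i : ℕ}
    (hq : IsPrimitiveRoot q n) (h0 : 0 < i) (hi : i < n) :
    gaussianBinomial q i (n - i) = 0 := by
  obtain ⟨i, rfl⟩ := Nat.exists_eq_succ_of_ne_zero h0.ne'
  have h := one_sub_pow_mul_gaussianBinomial q i (n - (i + 1))
  rw [Nat.add_sub_cancel' hi.le, hq.pow_eq_one, sub_self, zero_mul] at h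
  have hqi : 1 - q ^ (i + 1) ≠ 0 :=
    sub_ne_zero.mpr (hq.pow_ne_one_of_pos_of_lt h0.ne' hi).symm
  exact (mul_eq_zero.mp h).resolve_left hqi

end CommRing

theorem stmt18_general (k : Type*) [Field k] (n : ℕ) (ζ : k)
    (hζ : IsPrimitiveRoot ζ n) (i : ℕ) (h0 : 0 < i) (hi : i < n) :
    ∑ t ∈ Finset.range (i * (n - i) + 1),
        (Nat.card {p : Nat.Partition t //
            Multiset.card p.parts ≤ n - i ∧ ∀ x ∈ p.parts, x ≤ i} : k) * ζ⁻¹ ^ t = 0 := by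
  rw [← gaussianBinomial_eq_sum_card_box]
  exact hζ.inv.gaussianBinomial_eq_zero h0 hi

/-- If `ζ` is a primitive `n`-th root of unity in a field `k` and `0 < i < n`,
then `Σ_{t≥0} p(i, n−i, t) ζ^{−t} = 0`, i.e. the Gaussian binomial coefficient `C(n,i)_q`
vanishes at `q = ζ⁻¹`.  (The sum is finite since `p(i, n−i, t) = 0` for `t > i(n−i)`;
`p(i, n−i, t)` is the number of partitions of `t` into at most `n−i` parts each at most `i`.) -/
theorem stmt18 (k : Type*) [Field k] (n : ℕ) (hn : 2 ≤ n) (ζ : k)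
    (hζ : IsPrimitiveRoot ζ n) (i : ℕ) (h0 : 0 < i) (hi : i < n) :
    ∑ t ∈ Finset.range (i * (n - i) + 1),
        (Nat.card {p : Nat.Partition t //
            Multiset.card p.parts ≤ n - i ∧ ∀ x ∈ p.parts, x ≤ i} : k) * ζ⁻¹ ^ t = 0 :=
  stmt18_general k n ζ hζ i h0 hi
end
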